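/- arXiv:2505.09975 — 2 statements merged into one kernel-verified Lean document; each statement's English description precedes it below -/
import Mathlib

section
/- Let θ be a nonzero element of the formal power series ring Z_p[[X₁, X₂]]. Then there exist positive integers k₁ > k₂ > 3 with k₁ ≡ a (mod p−1) and k₂ ≡ b (mod p−1) (for any prescribed residues a, b) such that θ does not lie in the kernel of the evaluation homomorphism sending X₁ to (1+p)^{k₁} − 1 and X₂ to (1+p)^{k₂} − 1. -/
/-- Evaluation of a two-variable power series over `ℤ_[p]` at the point
`(X₁, X₂) = ((1+p)^k₁ - 1, (1+p)^k₂ - 1)`, given as the (convergent) sum over all monomials. -/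
noncomputable def padicWeightEval (p : ℕ) [Fact p.Prime] (k₁ k₂ : ℕ)
    (θ : MvPowerSeries (Fin 2) ℤ_[p]) : ℤ_[p] :=
  ∑' d : Fin 2 →₀ ℕ,
    (MvPowerSeries.coeff d θ) *
      ((1 + (p : ℤ_[p])) ^ k₁ - 1) ^ (d 0) * ((1 + (p : ℤ_[p])) ^ k₂ - 1) ^ (d 1)

/-! If `θ` vanished at every admissible point, fix `k₂ = B pᵐ` and let `k₁ = C pⁿ` vary:
the points `(1+p)^(C pⁿ) - 1` are nonzero, tend to `0` in `ℤ_p`, and keep the residue of `C`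
modulo `p - 1` (as `p ≡ 1`). So the one-variable series `θ(X, (1+p)^k₂ - 1)` has zeros accumulating
at `0`, hence each slice `∑ⱼ θᵢⱼ Yʲ` vanishes at the points `(1+p)^(B pᵐ) - 1`, which accumulate at
`0` as well. Over `ℤ_p` a power series `f` with zeros accumulating at `0` is zero: at a zero `x`,
`f₀ = -x g(x)` with `‖g(x)‖ ≤ 1`, so `‖f₀‖ ≤ ‖x‖`; then peel off one coefficient at a time. -/

open Filter Topology

lemma eventually_norm_lt_and_ne_zero {E : Type*} [SeminormedAddGroup E] {r : ℝ} (hr : 0 < r) :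
    ∀ᶠ x in 𝓝[≠] (0 : E), ‖x‖ < r ∧ x ≠ 0 :=
  ((Metric.eventually_nhds_iff_ball.2 ⟨r, hr, fun _ ↦ mem_ball_zero_iff.1⟩).filter_mono
    nhdsWithin_le_nhds).and eventually_mem_nhdsWithin

namespace PadicInt

variable {p : ℕ} [Fact p.Prime]

lemma summable_mul_pow (f : ℕ → ℤ_[p]) {x : ℤ_[p]} (hx : ‖x‖ < 1) :
    Summable fun i ↦ f i * x ^ i := by
  refine .of_norm_bounded (summable_geometric_of_lt_one (norm_nonneg x) hx) fun i ↦ ?_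
  rw [norm_mul, norm_pow]
  exact mul_le_of_le_one_left (by positivity) (norm_le_one _)

lemma summable_mul_pow_mul_pow (A : ℕ × ℕ → ℤ_[p]) {x y : ℤ_[p]} (hx : ‖x‖ < 1)
    (hy : ‖y‖ < 1) : Summable fun nm : ℕ × ℕ ↦ A nm * x ^ nm.1 * y ^ nm.2 := by
  refine .of_norm_bounded ((summable_geometric_of_lt_one (norm_nonneg x) hx).mul_of_nonneg
    (summable_geometric_of_lt_one (norm_nonneg y) hy) (fun _ ↦ by positivity)
    (fun _ ↦ by positivity)) fun nm ↦ ?_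
  rw [norm_mul, norm_mul, norm_pow, norm_pow]
  gcongr
  exact mul_le_of_le_one_left (by positivity) (norm_le_one _)

lemma tsum_mul_pow_eq_add (f : ℕ → ℤ_[p]) {x : ℤ_[p]} (hx : ‖x‖ < 1) :
    ∑' i, f i * x ^ i = f 0 + x * ∑' i, f (i + 1) * x ^ i := by
  rw [(summable_mul_pow f hx).tsum_eq_zero_add, ← (summable_mul_pow _ hx).tsum_mul_left]
  simp only [pow_zero, mul_one, pow_succ]
  congr 1
  exact tsum_congr fun i ↦ by ring

lemma coeff_zero_eq_zero_and_frequently_shift {f : ℕ → ℤ_[p]}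
    (hf : ∃ᶠ x in 𝓝[≠] 0, ∑' i, f i * x ^ i = 0) :
    f 0 = 0 ∧ ∃ᶠ x in 𝓝[≠] 0, ∑' i, f (i + 1) * x ^ i = 0 := by
  have hf' := hf.and_eventually (eventually_norm_lt_and_ne_zero one_pos)
  have hf0 : f 0 = 0 := by
    by_contra h0
    obtain ⟨x, ⟨hx, hx1, -⟩, hxf, -⟩ :=
      (hf'.and_eventually (eventually_norm_lt_and_ne_zero (norm_pos_iff.2 h0))).exists
    rw [tsum_mul_pow_eq_add f hx1, add_eq_zero_iff_eq_neg] at hx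
    have : ‖f 0‖ ≤ ‖x‖ := by
      rw [hx, norm_neg, norm_mul]
      exact mul_le_of_le_one_right (norm_nonneg _) (norm_le_one _)
    exact this.not_gt hxf
  refine ⟨hf0, hf'.mono fun x ⟨hx, hx1, hx0⟩ ↦ ?_⟩
  rwa [tsum_mul_pow_eq_add f hx1, hf0, zero_add, mul_eq_zero, or_iff_right hx0] at hx

theorem eq_zero_of_frequently_tsum_mul_pow_eq_zero {f : ℕ → ℤ_[p]}
    (hf : ∃ᶠ x in 𝓝[≠] 0, ∑' i, f i * x ^ i = 0) : f = 0 := by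
  funext i
  induction i generalizing f with
  | zero => exact (coeff_zero_eq_zero_and_frequently_shift hf).1
  | succ i ih => exact ih (coeff_zero_eq_zero_and_frequently_shift hf).2

lemma tsum_coeff_mul_pow_mul_pow_eq_tsum_tsum (θ : MvPowerSeries (Fin 2) ℤ_[p]) {x y : ℤ_[p]}
    (hx : ‖x‖ < 1) (hy : ‖y‖ < 1) :
    ∑' d : Fin 2 →₀ ℕ, MvPowerSeries.coeff d θ * x ^ d 0 * y ^ d 1 =
      ∑' n, (∑' m, MvPowerSeries.coeff ((finTwoArrowEquiv' ℕ).symm (n, m)) θ * y ^ m) *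
        x ^ n := by
  set A : ℕ × ℕ → ℤ_[p] := fun nm ↦ MvPowerSeries.coeff ((finTwoArrowEquiv' ℕ).symm nm) θ
  calc ∑' d : Fin 2 →₀ ℕ, MvPowerSeries.coeff d θ * x ^ d 0 * y ^ d 1
      = ∑' nm : ℕ × ℕ, A nm * x ^ nm.1 * y ^ nm.2 := by
        rw [← (finTwoArrowEquiv' ℕ).tsum_eq]
        simp only [A, Equiv.symm_apply_apply]
        rfl
    _ = ∑' (n) (m), A (n, m) * x ^ n * y ^ m :=
        (summable_mul_pow_mul_pow A hx hy).tsum_prod'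
          (summable_mul_pow_mul_pow A hx hy).prod_factor
    _ = _ := tsum_congr fun n ↦ by
        rw [← (summable_mul_pow (fun m ↦ A (n, m)) hy).tsum_mul_right]
        exact tsum_congr fun m ↦ by ring

theorem _root_.MvPowerSeries.eq_zero_of_frequently_frequently_tsum_eq_zero
    {θ : MvPowerSeries (Fin 2) ℤ_[p]}
    (hθ : ∃ᶠ y in 𝓝[≠] 0, ∃ᶠ x in 𝓝[≠] 0,
      ∑' d : Fin 2 →₀ ℕ, MvPowerSeries.coeff d θ * x ^ d 0 * y ^ d 1 = 0) : θ = 0 := by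
  have hslices : ∃ᶠ y in 𝓝[≠] (0 : ℤ_[p]), ∀ n,
      ∑' m, MvPowerSeries.coeff ((finTwoArrowEquiv' ℕ).symm (n, m)) θ * y ^ m = 0 := by
    refine (hθ.and_eventually (eventually_norm_lt_and_ne_zero one_pos)).mono
      fun y ⟨hy, hy1, _⟩ ↦ congrFun (eq_zero_of_frequently_tsum_mul_pow_eq_zero ?_)
    refine (hy.and_eventually (eventually_norm_lt_and_ne_zero one_pos)).mono
      fun x ⟨hx, hx1, _⟩ ↦ ?_
    rwa [tsum_coeff_mul_pow_mul_pow_eq_tsum_tsum θ hx1 hy1] at hx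
  ext d
  have hd := congrFun (eq_zero_of_frequently_tsum_mul_pow_eq_zero
    (hslices.mono fun y hy ↦ hy (d 0))) (d 1)
  rwa [show (d 0, d 1) = finTwoArrowEquiv' ℕ d from rfl, Equiv.symm_apply_apply] at hd

lemma norm_one_add_p_pow_mul_pow_sub_one_le (A n : ℕ) :
    ‖(1 + (p : ℤ_[p])) ^ (A * p ^ n) - 1‖ ≤ ((p : ℝ) ^ (n + 1))⁻¹ := by
  have hdvd : (p : ℤ) ^ (n + 1) ∣ (1 + p) ^ (A * p ^ n) - 1 := by
    have h := dvd_sub_pow_of_dvd_sub (R := ℤ) (p := p) (a := 1 + p) (b := 1) (by simp) n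
    rw [one_pow] at h
    rw [mul_comm, pow_mul]
    simpa using h.trans (sub_dvd_pow_sub_pow _ 1 A)
  have h := norm_int_le_pow_iff_dvd.2 hdvd
  rw [zpow_neg, zpow_natCast] at h
  exact_mod_cast h

lemma one_add_p_pow_sub_one_ne_zero {k : ℕ} (hk : k ≠ 0) : (1 + (p : ℤ_[p])) ^ k - 1 ≠ 0 := by
  have h : (1 : ℤ) < (1 + p) ^ k :=
    one_lt_pow₀ (by linarith [(Fact.out : p.Prime).pos]) hk
  exact_mod_cast (sub_pos.2 h).ne'

lemma tendsto_one_add_p_pow_mul_pow_sub_one {A : ℕ} (hA : A ≠ 0) :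
    Tendsto (fun n ↦ (1 + (p : ℤ_[p])) ^ (A * p ^ n) - 1) atTop (𝓝[≠] 0) := by
  have hp : (1 : ℝ) < p := by exact_mod_cast (Fact.out : p.Prime).one_lt
  refine tendsto_nhdsWithin_iff.2 ⟨squeeze_zero_norm (norm_one_add_p_pow_mul_pow_sub_one_le A)
    ?_, .of_forall fun n ↦ one_add_p_pow_sub_one_ne_zero ?_⟩
  · exact tendsto_inv_atTop_zero.comp
      ((tendsto_pow_atTop_atTop_of_one_lt hp).comp (tendsto_add_atTop_nat 1))
  · exact mul_ne_zero hA (pow_ne_zero _ (Fact.out : p.Prime).ne_zero)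

end PadicInt

lemma Nat.mul_pow_modEq_of_modEq {q k a : ℕ} (hq : 1 ≤ q) (h : k ≡ a [MOD q - 1]) (n : ℕ) :
    k * q ^ n ≡ a [MOD q - 1] := by
  simpa using h.mul ((Nat.modEq_sub hq).pow n)

theorem exists_classical_point_not_in_kernel_general
    (p : ℕ) [Fact p.Prime] (a b : ℕ)
    (θ : MvPowerSeries (Fin 2) ℤ_[p]) (hθ : θ ≠ 0) :
    ∃ k₁ k₂ : ℕ, k₁ > k₂ ∧ k₂ > 3 ∧
      k₁ % (p - 1) = a % (p - 1) ∧ k₂ % (p - 1) = b % (p - 1) ∧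
      padicWeightEval p k₁ k₂ θ ≠ 0 := by
  by_contra! h
  have hp := (Fact.out : p.Prime).two_le
  have hle_mul_pow (k n : ℕ) : k ≤ k * p ^ n := Nat.le_mul_of_pos_right k (by positivity)
  obtain ⟨B, hB, hBb⟩ : ∃ B, 3 < B ∧ B ≡ b [MOD p - 1] :=
    ⟨b + (p - 1) * 4, by omega, Nat.add_mul_mod_self_left b (p - 1) 4⟩
  have hexists_gt (k : ℕ) : ∃ C, k < C ∧ C ≡ a [MOD p - 1] := by
    refine ⟨a + (p - 1) * (k + 1), ?_, Nat.add_mul_mod_self_left a (p - 1) (k + 1)⟩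
    have := Nat.le_mul_of_pos_left (k + 1) (Nat.sub_pos_of_lt hp)
    omega
  refine hθ (MvPowerSeries.eq_zero_of_frequently_frequently_tsum_eq_zero ?_)
  refine (PadicInt.tendsto_one_add_p_pow_mul_pow_sub_one (A := B) (by omega)).frequently
    (.of_forall fun m ↦ ?_)
  obtain ⟨C, hC, hCa⟩ := hexists_gt (B * p ^ m)
  refine (PadicInt.tendsto_one_add_p_pow_mul_pow_sub_one (A := C) (by omega)).frequently
    (.of_forall fun n ↦ ?_)
  exact h _ _ (hC.trans_le (hle_mul_pow C n)) (hB.trans_le (hle_mul_pow B m))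
    (Nat.mul_pow_modEq_of_modEq (by omega) hCa n) (Nat.mul_pow_modEq_of_modEq (by omega) hBb m)

/-- Let `θ` be a nonzero element of `ℤ_p[[X₁, X₂]]`, and let `a, b` be prescribed residues
modulo `p - 1`.  Then there exist integers `k₁ > k₂ > 3` with `k₁ ≡ a` and `k₂ ≡ b (mod p-1)`
such that `θ` does not lie in the kernel of the evaluation homomorphism sending
`X₁ ↦ (1+p)^k₁ - 1` and `X₂ ↦ (1+p)^k₂ - 1`. -/
theorem exists_classical_point_not_in_kernel
    (p : ℕ) [Fact p.Prime] (hp : Odd p) (a b : ℕ)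
    (θ : MvPowerSeries (Fin 2) ℤ_[p]) (hθ : θ ≠ 0) :
    ∃ k₁ k₂ : ℕ, k₁ > k₂ ∧ k₂ > 3 ∧
      k₁ % (p - 1) = a % (p - 1) ∧ k₂ % (p - 1) = b % (p - 1) ∧
      padicWeightEval p k₁ k₂ θ ≠ 0 :=
  exists_classical_point_not_in_kernel_general p a b θ hθ
end

section
/- Let R be a reduced commutative ring with minimal primes η₁, …, η_t, and let A be the generalized matrix algebra consisting of 2×2 block matrices with diagonal blocks in M₂(R) and off-diagonal blocks in M₂(B) and M₂(C), where B, C are R-submodules of Frac(R) (on the total ring of fractions) with B·C ⊆ R. Suppose the trace function on A (restriction of the 4×4 matrix trace) is faithful, i.e. its kernel ideal is zero. If for some minimal prime η the image of C in Frac(R/η) is zero, then the image of B in Frac(R/η) is also zero. -/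
/-!
In a reduced Noetherian ring a minimal prime `η` is an associated prime, `η = Ann(s)`, and
`s ∉ η` since `s² ≠ 0`. For `b ∈ B` and `c ∈ C` the product `b c` lies in `R` and is killed
by `ψ`, so it lies in `η` and `s b c = 0`. Hence the elementary matrix `E₀₂(s b) ∈ A` pairs
to zero with all of `A` under the trace form, faithfulness gives `s b = 0`, and
`ψ(s) ≠ 0` forces `ψ(b) = 0`.
-/

/-- The underlying set of the generalized matrix algebra `(M₂(R) M₂(B); M₂(C) M₂(R))`
inside `M₄(K)`, where `K` is the total ring of fractions of `R` and `B, C` are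
`R`-submodules of `K`: block matrices whose two diagonal `2×2` blocks have entries
coming from `R`, whose top-right `2×2` block has entries in `B`, and whose bottom-left
`2×2` block has entries in `C`. -/
def gmaSet (R : Type*) [CommRing R] (K : Type*) [CommRing K] [Algebra R K]
    (B C : Submodule R K) : Set (Matrix (Fin 4) (Fin 4) K) :=
  { M | ∀ i j : Fin 4,
      (i.val < 2 → j.val < 2 → ∃ r : R, algebraMap R K r = M i j) ∧
      (2 ≤ i.val → 2 ≤ j.val → ∃ r : R, algebraMap R K r = M i j) ∧
      (i.val < 2 → 2 ≤ j.val → M i j ∈ B) ∧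
      (2 ≤ i.val → j.val < 2 → M i j ∈ C) }

theorem Ideal.exists_notMem_forall_mul_eq_zero_of_mem_minimalPrimes {R : Type*} [CommRing R]
    [IsReduced R] [IsNoetherianRing R] {η : Ideal R} (hη : η ∈ minimalPrimes R) :
    ∃ s ∉ η, ∀ x ∈ η, s * x = 0 := by
  have hass : η ∈ associatedPrimes R R := by
    refine Module.associatedPrimes.minimalPrimes_annihilator_subset_associatedPrimes R R ?_
    rwa [Module.annihilator_eq_bot.mpr inferInstance]
  obtain ⟨hprime, s, rfl⟩ := isAssociatedPrime_iff.mp hass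
  simp only [Submodule.mem_colon_singleton, Submodule.mem_bot, smul_eq_mul]
  refine ⟨s, fun hs => hprime.ne_top ?_, fun x hx => by rwa [mul_comm]⟩
  obtain rfl : s = 0 := IsReduced.eq_zero s ⟨2, by rwa [sq]⟩
  ext x
  simp

section gmaSet

variable {R : Type*} [CommRing R] {K : Type*} [CommRing K] [Algebra R K] {B C : Submodule R K}

theorem single_mem_gmaSet {b : K} (hb : b ∈ B) : Matrix.single 0 2 b ∈ gmaSet R K B C := by
  intro i j
  by_cases h : 0 = i ∧ 2 = j
  · obtain ⟨rfl, rfl⟩ := h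
    simp [hb]
  · rw [Matrix.single_apply_of_ne _ _ _ _ _ h]
    exact ⟨fun _ _ => ⟨0, map_zero _⟩, fun _ _ => ⟨0, map_zero _⟩,
      fun _ _ => B.zero_mem, fun _ _ => C.zero_mem⟩

theorem eq_zero_of_forall_mul_eq_zero_of_trace_faithful
    (hfaithful : ∀ x ∈ gmaSet R K B C,
      (∀ y ∈ gmaSet R K B C, Matrix.trace (x * y) = 0) → x = 0)
    {b : K} (hb : b ∈ B) (hbC : ∀ c ∈ C, b * c = 0) : b = 0 := by
  have h := hfaithful _ (single_mem_gmaSet hb) fun y hy => by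
    rw [Matrix.trace_single_mul, smul_eq_mul, hbC _ ((hy 2 0).2.2.2 (by decide) (by decide))]
  simpa using congrFun (congrFun h 0) 2

end gmaSet

theorem gma_image_B_eq_zero_of_image_C_eq_zero_general
    (R : Type*) [CommRing R] [IsReduced R] [IsNoetherianRing R]
    (K : Type*) [CommRing K] [Algebra R K]
    (B C : Submodule R K)
    (hBC : ∀ b ∈ B, ∀ c ∈ C, ∃ r : R, algebraMap R K r = b * c)
    (hfaithful : ∀ x ∈ gmaSet R K B C,
      (∀ y ∈ gmaSet R K B C, Matrix.trace (x * y) = 0) → x = 0)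
    (η : Ideal R) (hη : η ∈ minimalPrimes R)
    (F : Type*) [Field F] (ψ : K →+* F)
    (hker : RingHom.ker (ψ.comp (algebraMap R K)) = η)
    (hC : ∀ c ∈ C, ψ c = 0) :
    ∀ b ∈ B, ψ b = 0 := by
  intro b hb
  obtain ⟨s, hsη, hs⟩ := Ideal.exists_notMem_forall_mul_eq_zero_of_mem_minimalPrimes hη
  have hsb : s • b = 0 := by
    refine eq_zero_of_forall_mul_eq_zero_of_trace_faithful hfaithful (B.smul_mem s hb)
      fun c hc => ?_
    obtain ⟨r, hr⟩ := hBC b hb c hc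
    have hrη : r ∈ η := by
      rw [← hker, RingHom.mem_ker, RingHom.comp_apply, hr, map_mul, hC c hc, mul_zero]
    rw [smul_mul_assoc, ← hr, Algebra.smul_def, ← map_mul, hs r hrη, map_zero]
  have hψs : ψ (algebraMap R K s) ≠ 0 := by
    rwa [← hker] at hsη
  simpa [Algebra.smul_def, hψs] using congrArg ψ hsb

/-- Let `R` be a reduced Noetherian commutative ring with total ring of fractions `K`,
and let `B, C` be `R`-submodules of `K` with `B·C ⊆ R`.  Consider the generalized
matrix algebra `A = (M₂(R) M₂(B); M₂(C) M₂(R)) ⊆ M₄(K)` and assume the trace form on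
`A` is faithful, i.e. the only `x ∈ A` with `Trace(x·y) = 0` for all `y ∈ A` is `x = 0`.
Let `η` be a minimal prime of `R` and `ψ : K → F` a map to a field inducing
`R ↠ R/η ↪ Frac(R/η)` (so that the kernel of `ψ ∘ (R → K)` is `η`).  If the image of
`C` under `ψ` is zero, then the image of `B` under `ψ` is also zero. -/
theorem gma_image_B_eq_zero_of_image_C_eq_zero
    (R : Type*) [CommRing R] [IsReduced R] [IsNoetherianRing R]
    (K : Type*) [CommRing K] [Algebra R K] [IsFractionRing R K]
    (B C : Submodule R K)
    (hBC : ∀ b ∈ B, ∀ c ∈ C, ∃ r : R, algebraMap R K r = b * c)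
    (hfaithful : ∀ x ∈ gmaSet R K B C,
      (∀ y ∈ gmaSet R K B C, Matrix.trace (x * y) = 0) → x = 0)
    (η : Ideal R) (hη : η ∈ minimalPrimes R)
    (F : Type*) [Field F] (ψ : K →+* F)
    (hker : RingHom.ker (ψ.comp (algebraMap R K)) = η)
    (hC : ∀ c ∈ C, ψ c = 0) :
    ∀ b ∈ B, ψ b = 0 :=
  gma_image_B_eq_zero_of_image_C_eq_zero_general R K B C hBC hfaithful η hη F ψ hker hC
end
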